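/- arXiv:1701.02538 — 2 statements merged into one kernel-verified Lean document; each statement's English description precedes it below -/
import Mathlib

section
/- Let ρ ∈ ℂ with ρ ∉ 2πiℤ. Then the limit as N → ∞ of Σ_{q=−N}^{N} (1 − |q|/N)·(−1)^q/(ρ + 2πiq) exists and equals 1/(2·sh(ρ/2)). -/
/-!
The weights `1 - |q|/N` make the sum the Cesàro mean of the symmetric partial sums
`S_k = ∑_{|q| ≤ k} (-1)^q / (ρ + 2πiq)`, so it suffices that `S_k` converges. With
`x = ρ / (2πi)` we have `S_k = (2πi)⁻¹ ∑_{|q| ≤ k} (-1)^q / (x + q)`, whose limit is the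
partial fraction expansion `π / sin (π x)` of the cosecant. The latter follows from the
Mittag-Leffler expansion of the cotangent and `cot (z/2) - cot z = 1 / sin z`, since the terms
`1/(x - n) + 1/(x + n)` with `n` even sum to half the cotangent series at `x / 2`.
-/

open Complex Filter

/-- The complex hyperbolic sine `sh z = (e^z - e^{-z})/2`. -/
noncomputable def sh (z : ℂ) : ℂ := (Complex.exp z - Complex.exp (-z)) / 2

open Finset Real Topology

section SymmetricSums

variable {M : Type*} [AddCommGroup M]

lemma sum_Icc_neg_eq_add_sum_range (f : ℤ → M) (N : ℕ) :
    ∑ q ∈ Icc (-(N : ℤ)) N, f q = f 0 + ∑ n ∈ range N, (f (n + 1) + f (-(n + 1))) := by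
  induction N with
  | zero => simp
  | succ N ih =>
    rw [Nat.cast_succ, sum_Icc_succ_eq_add_endpoints, ih, sum_range_succ]
    abel

lemma sum_range_sum_Icc_neg_eq_sum_sub_abs_zsmul (f : ℤ → M) (N : ℕ) :
    ∑ k ∈ range N, ∑ q ∈ Icc (-(k : ℤ)) k, f q = ∑ q ∈ Icc (-(N : ℤ)) N, (N - |q|) • f q := by
  induction N with
  | zero => simp
  | succ N ih =>
    have hsub : Icc (-(N : ℤ)) N ⊆ Icc (-((N + 1 : ℕ) : ℤ)) (N + 1 : ℕ) :=
      Icc_subset_Icc (by omega) (by omega)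
    rw [sum_range_succ, ih, ← sum_subset hsub, ← sum_add_distrib]
    · refine sum_congr rfl fun q _ => ?_
      rw [← add_one_zsmul]
      congr 1
      push_cast
      ring
    · intro q hq hq'
      simp only [mem_Icc, not_and_or, not_le] at hq hq'
      push_cast at hq
      have hq_abs : |q| = N + 1 := abs_eq (by omega) |>.2 (by omega)
      rw [hq_abs, Nat.cast_succ, sub_self, zero_zsmul]

end SymmetricSums

lemma Filter.Tendsto.fejer_sum_Icc {𝕜 : Type*} [RCLike 𝕜] {f : ℤ → 𝕜} {L : 𝕜}
    (h : Tendsto (fun N : ℕ => ∑ q ∈ Icc (-(N : ℤ)) N, f q) atTop (𝓝 L)) :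
    Tendsto (fun N : ℕ => ∑ q ∈ Icc (-(N : ℤ)) N, (1 - ((|q| : ℤ) : 𝕜) / N) * f q)
      atTop (𝓝 L) := by
  refine h.cesaro_smul.congr' ?_
  filter_upwards [eventually_ne_atTop 0] with N hN
  rw [sum_range_sum_Icc_neg_eq_sum_sub_abs_zsmul, smul_sum]
  refine sum_congr rfl fun q _ => ?_
  rw [RCLike.real_smul_eq_coe_mul, zsmul_eq_mul]
  push_cast
  field_simp

lemma Complex.cot_sub_cot_two_mul {w : ℂ} (hw : sin (2 * w) ≠ 0) :
    cot w - cot (2 * w) = 1 / sin (2 * w) := by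
  rw [sin_two_mul] at hw ⊢
  have hsin : sin w ≠ 0 := fun h => hw (by rw [h]; ring)
  have hcos : cos w ≠ 0 := fun h => hw (by rw [h]; ring)
  rw [cot_eq_cos_div_sin, cot_eq_cos_div_sin, sin_two_mul, cos_two_mul]
  field_simp
  ring

lemma cotTerm_div_two (x : ℂ) (n : ℕ) : cotTerm (x / 2) n = 2 * cotTerm x (2 * n + 1) := by
  simp only [cotTerm]
  push_cast
  rw [show x / 2 - (n + 1) = (x - (2 * n + 1 + 1)) / 2 by ring,
    show x / 2 + (n + 1) = (x + (2 * n + 1 + 1)) / 2 by ring, one_div_div, one_div_div]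
  ring

lemma hasSum_neg_one_pow_mul_cotTerm {x : ℂ} (hx : x ∈ integerComplement) :
    HasSum (fun n : ℕ => (-1) ^ (n + 1) * cotTerm x n) (π / sin (π * x) - 1 / x) := by
  have hx2 : x / 2 ∈ integerComplement := by
    rintro ⟨n, hn⟩
    exact hx ⟨2 * n, by push_cast; rw [hn]; ring⟩
  have hall : HasSum (cotTerm x) (π * cot (π * x) - 1 / x) := by
    rw [cot_series_rep' hx]
    exact (summable_cotTerm hx).hasSum
  have hodd : HasSum (fun n => cotTerm x (2 * n + 1))
      ((π * cot (π * (x / 2)) - 1 / (x / 2)) / 2) := by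
    have h := (summable_cotTerm hx2).hasSum
    rw [show ∑' n, cotTerm (x / 2) n = _ from (cot_series_rep' hx2).symm] at h
    exact (h.div_const 2).congr_fun fun n => by rw [cotTerm_div_two]; ring
  obtain ⟨E, heven⟩ : Summable fun n => cotTerm x (2 * n) :=
    (summable_cotTerm hx).comp_injective (mul_right_injective₀ two_ne_zero)
  have hsplit := (heven.even_add_odd hodd).unique hall
  have hcot := Complex.cot_sub_cot_two_mul (w := π * (x / 2))
    (by rw [show 2 * (π * (x / 2)) = π * x by ring]; exact sin_pi_mul_ne_zero hx)
  rw [show 2 * ((π : ℂ) * (x / 2)) = π * x by ring] at hcot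
  have he : HasSum (fun k => (-1 : ℂ) ^ (2 * k + 1) * cotTerm x (2 * k)) (-E) :=
    heven.neg.congr_fun fun k => by simp [pow_succ, pow_mul]
  have ho : HasSum (fun k => (-1 : ℂ) ^ (2 * k + 1 + 1) * cotTerm x (2 * k + 1))
      ((π * cot (π * (x / 2)) - 1 / (x / 2)) / 2) :=
    hodd.congr_fun fun k => by simp [pow_succ, pow_mul]
  convert HasSum.even_add_odd (f := fun n => (-1 : ℂ) ^ (n + 1) * cotTerm x n) he ho using 1
  linear_combination hsplit - π * hcot

lemma tendsto_sum_Icc_neg_one_zpow_div {x : ℂ} (hx : x ∈ integerComplement) :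
    Tendsto (fun N : ℕ => ∑ q ∈ Icc (-(N : ℤ)) N, (-1 : ℂ) ^ q / (x + q)) atTop
      (𝓝 (π / sin (π * x))) := by
  have h := ((hasSum_neg_one_pow_mul_cotTerm hx).tendsto_sum_nat).const_add (1 / x)
  rw [add_sub_cancel] at h
  refine h.congr fun N => ?_
  rw [sum_Icc_neg_eq_add_sum_range]
  congr 1
  · simp
  · refine sum_congr rfl fun n _ => ?_
    have h1 : (-1 : ℂ) ^ ((n : ℤ) + 1) = (-1) ^ (n + 1) := by norm_cast
    have h2 : (-1 : ℂ) ^ (-((n : ℤ) + 1)) = (-1) ^ (n + 1) := by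
      rw [zpow_neg, h1, ← inv_pow, inv_neg, inv_one]
    rw [h1, h2]
    push_cast
    simp only [cotTerm]
    ring

lemma sin_pi_mul_div_two_pi_I (ρ : ℂ) : sin (π * (ρ / (2 * π * I))) = -(sh (ρ / 2) * I) := by
  rw [show (π : ℂ) * (ρ / (2 * π * I)) = -(ρ / 2) * I by field_simp; ring_nf; rw [I_sq]; ring,
    sin_mul_I, Complex.sinh_neg, neg_mul]
  rfl

lemma tendsto_sum_Icc_neg_one_zpow_div_add_two_pi_I_mul {ρ : ℂ}
    (hρ : ∀ q : ℤ, ρ ≠ 2 * π * I * q) :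
    Tendsto (fun N : ℕ => ∑ q ∈ Icc (-(N : ℤ)) N, (-1 : ℂ) ^ q / (ρ + 2 * π * I * q)) atTop
      (𝓝 (1 / (2 * sh (ρ / 2)))) := by
  have hc : (2 * π * I : ℂ) ≠ 0 := by simp [pi_ne_zero]
  have hx : ρ / (2 * π * I) ∈ integerComplement := by
    rintro ⟨q, hq⟩
    exact hρ q (by rw [hq]; field_simp)
  convert (tendsto_sum_Icc_neg_one_zpow_div hx).const_mul (2 * π * I)⁻¹ using 2
  · rw [mul_sum]
    refine sum_congr rfl fun q _ => ?_
    rw [show ρ + 2 * π * I * q = 2 * π * I * (ρ / (2 * π * I) + q) by field_simp,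
      div_mul_eq_div_div_swap, div_eq_inv_mul]
  · rw [sin_pi_mul_div_two_pi_I]
    field_simp
    ring_nf
    rw [I_sq]
    ring

theorem stmt16 (ρ : ℂ) (hρ : ∀ q : ℤ, ρ ≠ 2 * Real.pi * Complex.I * (q : ℂ)) :
    Filter.Tendsto
      (fun N : ℕ => ∑ q ∈ Finset.Icc (-(N : ℤ)) (N : ℤ),
        (1 - ((|q| : ℤ) : ℂ) / (N : ℂ)) * (-1 : ℂ) ^ q /
          (ρ + 2 * Real.pi * Complex.I * (q : ℂ)))
      Filter.atTop (nhds (1 / (2 * sh (ρ / 2)))) :=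
  (tendsto_sum_Icc_neg_one_zpow_div_add_two_pi_I_mul hρ).fejer_sum_Icc.congr
    fun _ => sum_congr rfl fun _ _ => (mul_div_assoc _ _ _).symm
end

section
/- Let 0 < δ ≤ 1/2 and let β ∈ ℝ satisfy 1/(√3·δ) ≤ β ≤ π/(2√3·δ). Then 17/(18δ) − 1/2 ≤ [β] + β²/[β] ≤ 7/(3δ) + 1/2, where [β] denotes the nearest integer to β (in particular [β] ≥ 1 under these hypotheses, so the division is well defined). -/
set_option maxHeartbeats 1000000 in
theorem stmt19 (δ β : ℝ) (hδ0 : 0 < δ) (hδ : δ ≤ 1 / 2)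
    (hβ1 : 1 / (Real.sqrt 3 * δ) ≤ β) (hβ2 : β ≤ Real.pi / (2 * Real.sqrt 3 * δ)) :
    17 / (18 * δ) - 1 / 2 ≤ (round β : ℝ) + β ^ 2 / (round β : ℝ) ∧
    (round β : ℝ) + β ^ 2 / (round β : ℝ) ≤ 7 / (3 * δ) + 1 / 2 := by
  have h3 : (Real.sqrt 3) ^ 2 = 3 := Real.sq_sqrt (by norm_num)
  have hs0 : 0 < Real.sqrt 3 := Real.sqrt_pos.mpr (by norm_num)
  have hs1 : Real.sqrt 3 < 1.7321 := by nlinarith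
  have hs2 : 1.732 < Real.sqrt 3 := by nlinarith
  have hπ : Real.pi < 3.15 := by
    have := Real.pi_lt_d2
    linarith
  -- β is bounded below by 2/√3
  have hβlb : 1.15 < β := by
    have h1 : 1 / (Real.sqrt 3 * (1/2)) ≤ 1 / (Real.sqrt 3 * δ) := by
      apply one_div_le_one_div_of_le (by positivity)
      nlinarith
    have h2 : (1.15 : ℝ) < 1 / (Real.sqrt 3 * (1/2)) := by
      rw [lt_div_iff₀ (by positivity)]
      nlinarith
    linarith
  have hn1 : (1 : ℤ) ≤ round β := by
    rw [round_eq]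
    apply Int.le_floor.mpr
    push_cast
    linarith
  have hnr : (1 : ℝ) ≤ (round β : ℝ) := by exact_mod_cast hn1
  have hnpos : (0 : ℝ) < (round β : ℝ) := by linarith
  have habs : |β - round β| ≤ 1/2 := abs_sub_round β
  rw [abs_le] at habs
  obtain ⟨habs1, habs2⟩ := habs
  constructor
  · -- lower bound: n + β²/n ≥ 2β ≥ 2/(√3 δ) ≥ 17/(18δ)
    have hamgm : 2 * β - (round β : ℝ) ≤ β ^ 2 / (round β : ℝ) := by
      have hx : β ^ 2 / (round β : ℝ) * (round β : ℝ) = β ^ 2 :=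
        div_mul_cancel₀ _ (ne_of_gt hnpos)
      nlinarith [sq_nonneg ((round β : ℝ) - β)]
    have hkey : 17 / (18 * δ) ≤ 2 * (1 / (Real.sqrt 3 * δ)) := by
      rw [mul_one_div, div_le_div_iff₀ (by positivity) (by positivity)]
      nlinarith
    linarith
  · -- upper bound
    by_cases hc : β < 3/2
    · -- then round β = 1
      have hn2 : round β ≤ 1 := by
        rw [round_eq]
        have : (⌊β + 1/2⌋ : ℤ) < 2 := by
          apply Int.floor_lt.mpr
          push_cast
          linarith
        omega
      have hne : round β = 1 := le_antisymm hn2 hn1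
      rw [hne]
      push_cast
      have : 7 / (3 * (1/2 : ℝ)) ≤ 7 / (3 * δ) := by
        apply div_le_div_of_nonneg_left (by norm_num) (by positivity)
        nlinarith
      nlinarith
    · push_neg at hc
      have hb12 : (1 : ℝ) ≤ β - 1/2 := by linarith
      have hd0 : β ^ 2 / (round β : ℝ) ≤ β ^ 2 / (β - 1/2) := by
        gcongr
        all_goals first | positivity | linarith
      have hd1 : β ^ 2 / (β - 1/2) ≤ β + 3/4 := by
        rw [div_le_iff₀ (by linarith)]
        nlinarith
      -- 2β ≤ π/(√3 δ) ≤ 47/(24δ)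
      have h2b : 2 * β ≤ Real.pi / (Real.sqrt 3 * δ) := by
        have : Real.pi / (2 * Real.sqrt 3 * δ) * 2 = Real.pi / (Real.sqrt 3 * δ) := by
          field_simp
        linarith
      have hpb : Real.pi / (Real.sqrt 3 * δ) ≤ 47 / (24 * δ) := by
        rw [div_le_div_iff₀ (by positivity) (by positivity)]
        have h24 : Real.pi * 24 < 47 * Real.sqrt 3 := by linarith
        nlinarith [mul_lt_mul_of_pos_right h24 hδ0]
      have hfin : (3:ℝ)/4 ≤ 3 / (8 * δ) := by
        rw [div_le_div_iff₀ (by norm_num) (by positivity)]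
        linarith
      have heq : 47 / (24 * δ) + 3 / (8 * δ) = 7 / (3 * δ) := by
        field_simp
        ring
      linarith
end
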